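/- arXiv:1703.08828 — 2 statements merged into one kernel-verified Lean document; each statement's English description precedes it below -/
import Mathlib

section
/- Let p >= 2 and q be coprime positive integers with q >= p. Define the numerical semigroup S = { a*p + b*q : a, b in Z_{>=0} }, phi(m) = #(S intersect [0,m)), and Phi(t,m) = phi(m) - t*m/2. Fix an integer i with 0 <= i < p and real t with 2i/p <= t <= 2(i+1)/p. Then the minimum of Phi(t, m) over integers m in [0, (p-1)(q-1)] equals the minimum of Phi(t, m) over integers m with iq - p < m <= iq. -/
/-!
For `c < p` with `c * q ≡ n [MOD p]`, the number `n` lies in `⟨p, q⟩` iff `c * q ≤ n`. A window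
`[m, m + p)` meets every residue class mod `p` exactly once, so it contains one semigroup element
for each `c < p` with `c * q < m + p`: at most `i` of them when `m + p ≤ i q`, at least `i + 1`
when `m + p > i q`. As `Φ(t, m + p) - Φ(t, m)` is that count minus `t p / 2 ∈ [i, i + 1]`,
stepping by `± p` carries any `m` into `(i q - p, i q]` without increasing `Φ`. Conversely, `Φ`
is dominated on `m < 0` by `Φ(t, 0) = 0` and, since all integers `≥ (p - 1)(q - 1)` lie in the
semigroup and `t ≤ 2`, on `m > (p - 1)(q - 1)` by `Φ(t, (p - 1)(q - 1))`.
-/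

open Set

def numSemigroup (p q : ℕ) : Set ℕ := {n | ∃ a b : ℕ, n = a * p + b * q}

noncomputable def torusPhi (p q : ℕ) (t : ℝ) (m : ℤ) : ℝ :=
  ((numSemigroup p q ∩ Iio m.toNat).ncard : ℝ) - t * m / 2

section Semigroup

variable {p q : ℕ}

theorem exists_lt_mul_modEq (hp : p ≠ 0) (hpq : p.Coprime q) (n : ℕ) :
    ∃ c < p, c * q ≡ n [MOD p] := by
  obtain ⟨c, hc, h⟩ := Nat.exists_mul_mod_eq_of_coprime n hpq.symm hp
  exact ⟨c, hc, by rwa [mul_comm] at h⟩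

theorem mem_numSemigroup_iff (hpq : p.Coprime q) {c n : ℕ} (hc : c < p)
    (hcn : c * q ≡ n [MOD p]) : n ∈ numSemigroup p q ↔ c * q ≤ n := by
  constructor
  · rintro ⟨a, b, rfl⟩
    have hcb : c ≡ b [MOD p] :=
      Nat.ModEq.cancel_right_of_coprime hpq (hcn.trans (by simp [Nat.ModEq]))
    have : c ≤ b := by
      rw [← Nat.mod_eq_of_lt hc]
      exact hcb.symm ▸ Nat.mod_le b p
    nlinarith
  · intro hle
    obtain ⟨a, ha⟩ := (Nat.modEq_iff_dvd' hle).1 hcn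
    exact ⟨a, c, by rw [mul_comm a]; omega⟩

theorem mem_numSemigroup_of_conductor_le (hp : p ≠ 0) (hpq : p.Coprime q) {n : ℕ}
    (hn : ((p : ℤ) - 1) * (q - 1) ≤ n) : n ∈ numSemigroup p q := by
  obtain ⟨c, hc, hcn⟩ := exists_lt_mul_modEq hp hpq n
  refine (mem_numSemigroup_iff hpq hc hcn).2 (not_lt.1 fun hlt => ?_)
  have hpc : p ≤ c * q - n := Nat.le_of_dvd (by omega) ((Nat.modEq_iff_dvd' hlt.le).1 hcn.symm)
  have hcq : (c : ℤ) * q ≤ (p - 1) * q := mul_le_mul_of_nonneg_right (by omega) (by positivity)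
  zify [hlt.le] at hpc
  linarith

theorem exists_modEq_mem_Ico (hp : 0 < p) {x : ℕ} {m : ℤ} (hx : (x : ℤ) < m + p) :
    ∃ n : ℕ, n ≡ x [MOD p] ∧ x ≤ n ∧ (n : ℤ) ∈ Ico m (m + p) := by
  set r := ((x : ℤ) - m) % p
  have hr0 : 0 ≤ r := Int.emod_nonneg _ (by omega)
  have hrp : r < p := Int.emod_lt_of_pos _ (by omega)
  have hmod : m + r ≡ x [ZMOD p] := by simpa using (Int.mod_modEq (x - m) p).add_left m
  have hxr : (x : ℤ) ≤ m + r := by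
    by_contra! hlt
    have := Int.eq_zero_of_dvd_of_nonneg_of_lt (by omega) (by omega) hmod.dvd
    omega
  refine ⟨(m + r).toNat, ?_, by omega, by simp only [mem_Ico]; omega⟩
  rw [← Int.natCast_modEq_iff, Int.toNat_of_nonneg (by omega)]
  exact hmod

theorem ncard_inter_Iio_toNat_add (S : Set ℕ) (m : ℤ) {l : ℤ} (hl : 0 ≤ l) :
    (S ∩ Iio (m + l).toNat).ncard =
      (S ∩ Iio m.toNat).ncard + (S ∩ Nat.cast ⁻¹' Ico m (m + l)).ncard := by
  have hsplit : Iio (m + l).toNat = Iio m.toNat ∪ Nat.cast ⁻¹' Ico m (m + l) := by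
    ext n
    simp only [mem_union, mem_Iio, mem_preimage, mem_Ico, Int.lt_toNat]
    omega
  rw [hsplit, inter_union_distrib_left, ncard_union_eq ?_ ?_ ?_]
  · exact disjoint_left.2 fun n ⟨_, hn⟩ ⟨_, hn'⟩ => by
      simp only [mem_Iio, Int.lt_toNat, mem_preimage, mem_Ico] at hn hn'
      omega
  · exact (finite_Iio _).inter_of_right S
  · exact ((finite_Ico m (m + l)).preimage Nat.cast_injective.injOn).inter_of_right S

theorem ncard_numSemigroup_inter_Ico_le (hp : p ≠ 0) (hpq : p.Coprime q) {i : ℕ} {m : ℤ}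
    (h : m + p ≤ i * q) : (numSemigroup p q ∩ Nat.cast ⁻¹' Ico m (m + p)).ncard ≤ i := by
  choose c hcp hcq using exists_lt_mul_modEq hp hpq
  calc _ ≤ (Iio i).ncard := ncard_le_ncard_of_injOn c ?_ ?_ (finite_Iio i)
    _ = i := ncard_Iio_nat i
  · rintro n ⟨hn, hnm, hnp⟩
    have hle : (c n * q : ℤ) ≤ n := by
      exact_mod_cast (mem_numSemigroup_iff hpq (hcp n) (hcq n)).1 hn
    exact lt_of_mul_lt_mul_right (by zify; omega : c n * q < i * q) (Nat.zero_le q)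
  · rintro n ⟨-, hnm, hnp⟩ n' ⟨-, hnm', hnp'⟩ he
    refine ((hcq n).symm.trans (he ▸ hcq n')).eq_of_abs_lt (abs_lt.2 ⟨?_, ?_⟩) <;> omega

theorem le_ncard_numSemigroup_inter_Ico (hpq : p.Coprime q) {i : ℕ} (hi : i < p) {m : ℤ}
    (h : i * q < m + p) : i + 1 ≤ (numSemigroup p q ∩ Nat.cast ⁻¹' Ico m (m + p)).ncard := by
  have hwindow : ∀ c ∈ Iio (i + 1), ∃ n ∈ numSemigroup p q ∩ Nat.cast ⁻¹' Ico m (m + p),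
      n ≡ c * q [MOD p] := by
    intro c hc
    rw [mem_Iio] at hc
    have hcq : (c * q : ℤ) ≤ i * q := by exact_mod_cast Nat.mul_le_mul_right q (by omega)
    have hx : ((c * q : ℕ) : ℤ) < m + p := by push_cast; omega
    obtain ⟨n, hn, hle, hmem⟩ := exists_modEq_mem_Ico (by omega) hx
    exact ⟨n, ⟨(mem_numSemigroup_iff hpq (by omega) hn.symm).2 hle, hmem⟩, hn⟩
  choose! e he hce using hwindow
  calc i + 1 = (Iio (i + 1)).ncard := (ncard_Iio_nat _).symm
    _ ≤ _ := ncard_le_ncard_of_injOn e he ?_ ?_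
  · intro c hc c' hc' hcc'
    have := Nat.ModEq.cancel_right_of_coprime hpq ((hce c hc).symm.trans (hcc' ▸ hce c' hc'))
    simp only [mem_Iio] at hc hc'
    exact this.eq_of_lt_of_lt (by omega) (by omega)
  · exact ((finite_Ico m (m + p)).preimage Nat.cast_injective.injOn).inter_of_right _

end Semigroup

section Descent

variable {α : Type*} [Preorder α] {f : ℤ → α} {d M : ℤ}

theorem exists_mem_Ioc_le_of_le (hd : 0 < d) (hup : ∀ m, m + d ≤ M → f (m + d) ≤ f m)
    {m : ℤ} (hm : m ≤ M) : ∃ m' ∈ Ioc (M - d) M, f m' ≤ f m := by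
  by_cases hw : M - d < m
  · exact ⟨m, ⟨hw, hm⟩, le_rfl⟩
  · obtain ⟨m', hm', hle⟩ := exists_mem_Ioc_le_of_le hd hup (m := m + d) (by omega)
    exact ⟨m', hm', hle.trans (hup m (by omega))⟩
termination_by (M - m).toNat

theorem exists_mem_Ioc_le_of_lt (hd : 0 < d) (hdown : ∀ m, M - d < m → f m ≤ f (m + d))
    {m : ℤ} (hm : M - d < m) : ∃ m' ∈ Ioc (M - d) M, f m' ≤ f m := by
  by_cases hw : m ≤ M
  · exact ⟨m, ⟨hm, hw⟩, le_rfl⟩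
  · obtain ⟨m', hm', hle⟩ := exists_mem_Ioc_le_of_lt hd hdown (m := m - d) (by omega)
    exact ⟨m', hm', hle.trans (by simpa using hdown (m - d) (by omega))⟩
termination_by (m - M).toNat

end Descent

theorem csInf_image_le_csInf_image {α β : Type*} [ConditionallyCompleteLattice β] {f : α → β}
    {A B : Set α} (hB : B.Nonempty) (hA : BddBelow (f '' A))
    (h : ∀ b ∈ B, ∃ a ∈ A, f a ≤ f b) : sInf (f '' A) ≤ sInf (f '' B) := by
  refine le_csInf (hB.image f) ?_
  rintro _ ⟨b, hb, rfl⟩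
  obtain ⟨a, ha, hab⟩ := h b hb
  exact (csInf_le hA (mem_image_of_mem f ha)).trans hab

section TorusPhi

variable {p q : ℕ} {t : ℝ}

theorem torusPhi_of_nonpos {m : ℤ} (hm : m ≤ 0) : torusPhi p q t m = -(t * m / 2) := by
  simp [torusPhi, Int.toNat_of_nonpos hm]

theorem torusPhi_add (m : ℤ) {l : ℤ} (hl : 0 ≤ l) :
    torusPhi p q t (m + l) = torusPhi p q t m
      + (numSemigroup p q ∩ Nat.cast ⁻¹' Ico m (m + l)).ncard - t * l / 2 := by
  simp only [torusPhi, ncard_inter_Iio_toNat_add _ m hl]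
  push_cast
  ring

theorem torusPhi_add_le (hp : p ≠ 0) (hpq : p.Coprime q) {i : ℕ} (ht : i ≤ t * p / 2) {m : ℤ}
    (h : m + p ≤ i * q) : torusPhi p q t (m + p) ≤ torusPhi p q t m := by
  have hw : ((numSemigroup p q ∩ Nat.cast ⁻¹' Ico m (m + p)).ncard : ℝ) ≤ i := by
    exact_mod_cast ncard_numSemigroup_inter_Ico_le hp hpq h
  rw [torusPhi_add m (Nat.cast_nonneg p)]
  push_cast
  linarith

theorem torusPhi_le_add (hpq : p.Coprime q) {i : ℕ} (hi : i < p) (ht : t * p / 2 ≤ i + 1)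
    {m : ℤ} (h : i * q < m + p) : torusPhi p q t m ≤ torusPhi p q t (m + p) := by
  have hw : (i : ℝ) + 1 ≤ (numSemigroup p q ∩ Nat.cast ⁻¹' Ico m (m + p)).ncard := by
    exact_mod_cast le_ncard_numSemigroup_inter_Ico hpq hi h
  rw [torusPhi_add m (Nat.cast_nonneg p)]
  push_cast
  linarith

theorem torusPhi_monotoneOn (hp : p ≠ 0) (hpq : p.Coprime q) (hq : 0 < q) (ht : t ≤ 2) :
    MonotoneOn (torusPhi p q t) (Ici (((p : ℤ) - 1) * (q - 1))) := by
  refine monotoneOn_of_le_add_one ordConnected_Ici fun m _ hm _ => ?_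
  have hm0 : 0 ≤ m := le_trans (mul_nonneg (by omega) (by omega)) hm
  have hw : numSemigroup p q ∩ Nat.cast ⁻¹' Ico m (m + 1) = {m.toNat} := by
    ext n
    simp only [mem_inter_iff, mem_preimage, mem_Ico, mem_singleton_iff]
    refine ⟨fun ⟨_, h⟩ => by omega, ?_⟩
    rintro rfl
    exact ⟨mem_numSemigroup_of_conductor_le hp hpq (by rw [Int.toNat_of_nonneg hm0]; exact hm),
      by omega⟩
  rw [torusPhi_add m zero_le_one, hw, ncard_singleton]
  push_cast
  linarith

theorem exists_mem_Icc_torusPhi_le (hp : p ≠ 0) (hpq : p.Coprime q) (hq : 0 < q) (ht0 : 0 ≤ t)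
    (ht2 : t ≤ 2) (m : ℤ) :
    ∃ m' ∈ Icc 0 (((p : ℤ) - 1) * (q - 1)), torusPhi p q t m' ≤ torusPhi p q t m := by
  have hg : (0 : ℤ) ≤ ((p : ℤ) - 1) * (q - 1) := mul_nonneg (by omega) (by omega)
  rcases lt_or_ge m 0 with hm | hm
  · refine ⟨0, ⟨le_rfl, hg⟩, ?_⟩
    rw [torusPhi_of_nonpos le_rfl, torusPhi_of_nonpos hm.le]
    have : (m : ℝ) < 0 := by exact_mod_cast hm
    nlinarith
  rcases le_or_gt m (((p : ℤ) - 1) * (q - 1)) with hmg | hmg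
  · exact ⟨m, ⟨hm, hmg⟩, le_rfl⟩
  · exact ⟨_, ⟨hg, le_rfl⟩, torusPhi_monotoneOn hp hpq hq ht2 (mem_Ici.2 le_rfl) hmg.le hmg.le⟩

theorem exists_mem_Ioc_torusPhi_le (hpq : p.Coprime q) {i : ℕ} (hi : i < p)
    (ht1 : i ≤ t * p / 2) (ht2 : t * p / 2 ≤ i + 1) (m : ℤ) :
    ∃ m' ∈ Ioc ((i : ℤ) * q - p) (i * q), torusPhi p q t m' ≤ torusPhi p q t m := by
  have hp : (0 : ℤ) < p := by omega
  rcases le_or_gt m (i * q) with hm | hm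
  · refine exists_mem_Ioc_le_of_le hp (fun m h => ?_) hm
    exact torusPhi_add_le (by omega) hpq ht1 h
  · refine exists_mem_Ioc_le_of_lt hp (fun m h => ?_) (by omega)
    exact torusPhi_le_add hpq hi ht2 (by omega)

end TorusPhi

theorem stmt8_general (p q : ℕ) (hq : p ≤ q) (hpq : Nat.Coprime p q)
    (S : Set ℕ) (hS : S = {n : ℕ | ∃ a b : ℕ, n = a * p + b * q})
    (phi : ℤ → ℤ) (hphi : ∀ m : ℤ, phi m = ((S ∩ Set.Iio m.toNat).ncard : ℤ))
    (Phi : ℝ → ℤ → ℝ) (hPhi : ∀ t m, Phi t m = (phi m : ℝ) - t * m / 2)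
    (i : ℕ) (hi : i < p) (t : ℝ)
    (ht1 : 2 * i / (p : ℝ) ≤ t) (ht2 : t ≤ 2 * (i + 1) / (p : ℝ)) :
    sInf (Phi t '' {m : ℤ | 0 ≤ m ∧ m ≤ ((p : ℤ) - 1) * ((q : ℤ) - 1)}) =
    sInf (Phi t '' {m : ℤ | (i : ℤ) * q - p < m ∧ m ≤ (i : ℤ) * q}) := by
  have hPhi_eq : Phi t = torusPhi p q t := by
    funext m
    rw [hPhi, hphi, hS, torusPhi, Int.cast_natCast]
    rfl
  have hp : (0 : ℝ) < p := by exact_mod_cast (by omega : 0 < p)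
  have hlow : (i : ℝ) ≤ t * p / 2 := by rw [div_le_iff₀ hp] at ht1; linarith
  have hhigh : t * p / 2 ≤ i + 1 := by rw [le_div_iff₀ hp] at ht2; linarith
  have hip : (i : ℝ) + 1 ≤ p := by exact_mod_cast hi
  have ht0 : 0 ≤ t := by nlinarith
  have ht_le_two : t ≤ 2 := by nlinarith
  have hg : (0 : ℤ) ≤ ((p : ℤ) - 1) * (q - 1) := mul_nonneg (by omega) (by omega)
  rw [hPhi_eq]
  apply le_antisymm
  · refine csInf_image_le_csInf_image ⟨i * q, by omega, le_rfl⟩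
      ((finite_Icc _ _).image _).bddBelow fun m _ => ?_
    exact exists_mem_Icc_torusPhi_le (by omega) hpq (by omega) ht0 ht_le_two m
  · exact csInf_image_le_csInf_image ⟨0, le_rfl, hg⟩ ((finite_Ioc _ _).image _).bddBelow
      fun m _ => exists_mem_Ioc_torusPhi_le hpq hi hlow hhigh m

/-- Localization of the minimum of `Φ_{T_{p,q}}(t,m)` to the window `(iq-p, iq]`. -/
theorem stmt8 (p q : ℕ) (hp : 2 ≤ p) (hq : p ≤ q) (hpq : Nat.Coprime p q)
    (S : Set ℕ) (hS : S = {n : ℕ | ∃ a b : ℕ, n = a * p + b * q})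
    (phi : ℤ → ℤ) (hphi : ∀ m : ℤ, phi m = ((S ∩ Set.Iio m.toNat).ncard : ℤ))
    (Phi : ℝ → ℤ → ℝ) (hPhi : ∀ t m, Phi t m = (phi m : ℝ) - t * m / 2)
    (i : ℕ) (hi : i < p) (t : ℝ)
    (ht1 : 2 * i / (p : ℝ) ≤ t) (ht2 : t ≤ 2 * (i + 1) / (p : ℝ)) :
    sInf (Phi t '' {m : ℤ | 0 ≤ m ∧ m ≤ ((p : ℤ) - 1) * ((q : ℤ) - 1)}) =
    sInf (Phi t '' {m : ℤ | (i : ℤ) * q - p < m ∧ m ≤ (i : ℤ) * q}) :=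
  stmt8_general p q hq hpq S hS phi hphi Phi hPhi i hi t ht1 ht2
end

section
/- Let g >= 1 and S subset of Z_{>=0} with 0 in S, Z_{>=2g} subset of S, #(S intersect [0,2g)) = g, and the symmetry phi(2g-v) = g - v + phi(v) for 0 <= v <= 2g, where phi(m) = #(S intersect [0,m)). Let mu = min_{1<=v<=2g-1} 2 phi(v)/v, Upsilon(s) = max_{0<=v<=2g}(-2 phi(v) - s(g-v)), and Upsilon^{tr}(s) = max_{1<=v<=2g-1}(-2 phi(v) - s(g-v)). Then for all s with mu <= s <= 2 - mu, Upsilon^{tr}(s) = Upsilon(s). -/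
/-!
Both endpoint values are beaten by an interior one. Let `v` realise the minimum `μ` of
`2 φ(v) / v`. For `s ≥ μ` we have `2 φ(v) ≤ s v`, which is exactly what makes the value at `v`
at least the value at `0`. For `s ≤ 2 - μ` we have `2 φ(v) ≤ (2 - s) v`, and the symmetry
`φ(2g - v) = g - v + φ(v)` turns this into the value at `2g - v` being at least the value at `2g`.
-/

open Finset

theorem Finset.sup'_eq_sup'_of_subset_of_forall_exists_le {α β : Type*} [SemilatticeSup α]
    {s t : Finset β} {f : β → α} (hs : s.Nonempty) (ht : t.Nonempty) (hst : s ⊆ t)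
    (hdom : ∀ x ∈ t, ∃ y ∈ s, f x ≤ f y) : s.sup' hs f = t.sup' ht f :=
  le_antisymm (sup'_mono f hst hs) <| sup'_le ht f fun x hx =>
    let ⟨_, hy, hxy⟩ := hdom x hx
    hxy.trans (le_sup' f hy)

theorem Finset.exists_two_mul_le_mul_of_inf'_le {t : Finset ℕ} (ht : t.Nonempty)
    (hpos : ∀ v ∈ t, 0 < v) {phi : ℕ → ℕ} {s : ℝ}
    (hs : t.inf' ht (fun v => 2 * (phi v : ℝ) / v) ≤ s) :
    ∃ v ∈ t, 2 * (phi v : ℝ) ≤ s * v := by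
  obtain ⟨v, hv, hvs⟩ := (inf'_le_iff ht).1 hs
  exact ⟨v, hv, (div_le_iff₀ (Nat.cast_pos.2 (hpos v hv))).1 hvs⟩

/-- The term indexed by `v` in the Borodzik–Livingston formula for `Υ(s)`. -/
def upsilonTerm (phi : ℕ → ℕ) (g : ℕ) (s : ℝ) (v : ℕ) : ℝ :=
  -2 * (phi v : ℝ) - s * ((g : ℝ) - v)

section

variable {phi : ℕ → ℕ} {g : ℕ} {s : ℝ} {v : ℕ}

theorem upsilonTerm_zero_le (h : 2 * (phi v : ℝ) ≤ s * v) :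
    upsilonTerm phi g s 0 ≤ upsilonTerm phi g s v := by
  have := (phi 0).cast_nonneg (α := ℝ)
  simp only [upsilonTerm, Nat.cast_zero]
  linarith

theorem upsilonTerm_two_mul_le (hsym : ∀ v ≤ 2 * g, (phi (2 * g - v) : ℤ) = g - v + phi v)
    (hv : v ≤ 2 * g) (h : 2 * (phi v : ℝ) ≤ (2 - s) * v) :
    upsilonTerm phi g s (2 * g) ≤ upsilonTerm phi g s (2 * g - v) := by
  have hsym₀ : (phi (2 * g) : ℝ) = g + phi 0 := by
    have h := hsym 0 (Nat.zero_le _)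
    rw [Nat.sub_zero, Nat.cast_zero, sub_zero] at h
    exact_mod_cast h
  have hsymv : (phi (2 * g - v) : ℝ) = g - v + phi v := by exact_mod_cast hsym v hv
  have := (phi 0).cast_nonneg (α := ℝ)
  simp only [upsilonTerm, hsym₀, hsymv, Nat.cast_sub hv, Nat.cast_mul, Nat.cast_ofNat]
  linarith

end

/-- On the interval `μ ≤ s ≤ 2 - μ`, the truncated Upsilon invariant coincides with
the full Upsilon invariant. -/
theorem stmt17 (g : ℕ) (hg : 1 ≤ g)
    (phi : ℕ → ℕ)
    (hsym : ∀ v ≤ 2 * g, (phi (2 * g - v) : ℤ) = (g : ℤ) - v + phi v)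
    (mu : ℝ)
    (hmu : mu = (Finset.Icc 1 (2 * g - 1)).inf' (Finset.nonempty_Icc.mpr (by omega))
      fun v => 2 * (phi v : ℝ) / v)
    (s : ℝ) (hs1 : mu ≤ s) (hs2 : s ≤ 2 - mu) :
    ((Finset.Icc 1 (2 * g - 1)).sup' (Finset.nonempty_Icc.mpr (by omega))
        fun v => -2 * (phi v : ℝ) - s * ((g : ℝ) - v)) =
    ((Finset.Icc 0 (2 * g)).sup' (Finset.nonempty_Icc.mpr (by omega))
        fun v => -2 * (phi v : ℝ) - s * ((g : ℝ) - v)) := by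
  have hpos : ∀ v ∈ Icc 1 (2 * g - 1), 0 < v := fun v hv => (mem_Icc.1 hv).1
  obtain ⟨v, hv, hvs⟩ := exists_two_mul_le_mul_of_inf'_le _ hpos (hmu ▸ hs1)
  obtain ⟨w, hw, hws⟩ :=
    exists_two_mul_le_mul_of_inf'_le (s := 2 - s) _ hpos (by rw [← hmu]; linarith)
  refine sup'_eq_sup'_of_subset_of_forall_exists_le _ _
    (Icc_subset_Icc (Nat.zero_le _) (Nat.sub_le _ _)) fun u hu => ?_
  rw [mem_Icc] at hw
  rcases Nat.eq_zero_or_pos u with rfl | hu₀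
  · exact ⟨v, hv, upsilonTerm_zero_le hvs⟩
  rcases (mem_Icc.1 hu).2.eq_or_lt with rfl | hu₁
  · exact ⟨2 * g - w, mem_Icc.2 ⟨by omega, by omega⟩, upsilonTerm_two_mul_le hsym (by omega) hws⟩
  · exact ⟨u, mem_Icc.2 ⟨hu₀, by omega⟩, le_rfl⟩
end
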